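/- arXiv:2105.00942 — 2 statements merged into one kernel-verified Lean document; each statement's English description precedes it below -/
import Mathlib

section
/- For every rank r ∈ {1,...,N} and every j ∈ {1,...,N}, the smooth rank indicator I_j^{r,α} converges as α → +∞ to the true rank indicator I_j^r, where I_j^r = 1 if j is the index of the r-th largest score and 0 otherwise. -/
noncomputable def prodMask {N : ℕ} (S : Fin N → ℝ) (α δ : ℝ) : ℕ → Fin N → ℝ
  | 0 => fun _ => 1
  | r + 1 => fun j =>
      prodMask S α δ r j *
        (1 - (Real.exp (α * S j * prodMask S α δ r j) /
              ∑ j', Real.exp (α * S j' * prodMask S α δ r j')) - δ)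

/-- Smooth rank indicator `I_j^{r+1,α}` (the argument `r : ℕ` is the 0-indexed rank,
so `smoothI S α δ 0 j` is the top-1 indicator `I_j^{1,α}`). -/
noncomputable def smoothI {N : ℕ} (S : Fin N → ℝ) (α δ : ℝ) (r : ℕ) (j : Fin N) : ℝ :=
  Real.exp (α * S j * prodMask S α δ r j) /
    ∑ j', Real.exp (α * S j' * prodMask S α δ r j')

/-- True rank indicator: `trueI S r j = 1` iff `S j` is the `(r+1)`-th largest score
(0-indexed rank `r`), i.e. exactly `r` scores are strictly larger than `S j`. -/
noncomputable def trueI {N : ℕ} (S : Fin N → ℝ) (r : ℕ) (j : Fin N) : ℝ :=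
  if (Finset.univ.filter fun i => S j < S i).card = r then 1 else 0

/-!
Induction on the rank `r`. The mask `prodMask` multiplies the scores inside an exponential
scaled by `α`, so the induction hypothesis must control it to `o(1/α)`: we prove
`α * (prodMask - trueMask) → 0`, where `trueMask` uses the true indicators. Then the exponents
of the softmax defining `I^{r,α}` are `α * S_i * trueMask_i + o(1)`. The entries of rank `< r`
have `trueMask ≤ 0`, the others `trueMask = (1 - δ)^r > 0`, so the entry of rank `r` is the unique
maximiser, and the softmax converges to its indicator with an exponentially small error, again
`o(1/α)`; this error propagates through the product defining the next mask.
-/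

open Filter Finset Real Topology

lemma tendsto_mul_exp_mul_atTop_of_neg {c : ℝ} (hc : c < 0) :
    Tendsto (fun α : ℝ => α * exp (c * α)) atTop (𝓝 0) :=
  (tendsto_rpow_mul_exp_neg_mul_atTop_nhds_zero 1 (-c) (neg_pos.mpr hc)).congr fun α => by
    rw [rpow_one, neg_neg]

lemma tendsto_of_tendsto_mul_sub {f : ℝ → ℝ} {c : ℝ}
    (h : Tendsto (fun α => α * (f α - c)) atTop (𝓝 0)) : Tendsto f atTop (𝓝 c) := by
  rw [← tendsto_sub_nhds_zero_iff]
  refine (h.div_atTop tendsto_id).congr' ?_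
  filter_upwards [eventually_ne_atTop 0] with α hα
  rw [id, mul_div_cancel_left₀ _ hα]

section Softmax

variable {ι : Type*} [Fintype ι]

noncomputable def softmax (x : ι → ℝ) (j : ι) : ℝ :=
  exp (x j) / ∑ i, exp (x i)

lemma softmax_nonneg (x : ι → ℝ) (j : ι) : 0 ≤ softmax x j := by
  unfold softmax; positivity

lemma sum_softmax [Nonempty ι] (x : ι → ℝ) : ∑ j, softmax x j = 1 := by
  simp only [softmax, ← Finset.sum_div]
  exact div_self (Finset.sum_pos (fun i _ => exp_pos (x i)) univ_nonempty).ne'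

lemma softmax_le_exp_sub (x : ι → ℝ) (j k : ι) : softmax x j ≤ exp (x j - x k) := by
  rw [softmax, exp_sub]
  gcongr
  exact Finset.single_le_sum (fun i _ => (exp_pos (x i)).le) (mem_univ k)

variable {a : ι → ℝ} {ε : ι → ℝ → ℝ}

lemma tendsto_mul_softmax_of_lt (hε : ∀ i, Tendsto (ε i) atTop (𝓝 0)) {i k : ι}
    (hik : a i < a k) :
    Tendsto (fun α => α * softmax (fun l => α * a l + ε l α) i) atTop (𝓝 0) := by
  have hbound : Tendsto (fun α => α * exp ((a i - a k) * α) * exp (ε i α - ε k α))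
      atTop (𝓝 0) := by
    have hexp : Tendsto (fun α => exp (ε i α - ε k α)) atTop (𝓝 1) := by
      simpa using ((hε i).sub (hε k)).rexp
    simpa using (tendsto_mul_exp_mul_atTop_of_neg (sub_neg.mpr hik)).mul hexp
  refine tendsto_of_tendsto_of_tendsto_of_le_of_le' tendsto_const_nhds hbound ?_ ?_
  all_goals filter_upwards [eventually_ge_atTop 0] with α hα
  · exact mul_nonneg hα (softmax_nonneg _ _)
  · rw [mul_assoc, ← exp_add]
    gcongr
    exact (softmax_le_exp_sub _ i k).trans_eq (by congr 1; ring)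

lemma tendsto_mul_softmax_sub_ite [DecidableEq ι] (hε : ∀ i, Tendsto (ε i) atTop (𝓝 0))
    {k : ι} (hk : ∀ i ≠ k, a i < a k) (j : ι) :
    Tendsto (fun α => α * (softmax (fun l => α * a l + ε l α) j - if j = k then 1 else 0))
      atTop (𝓝 0) := by
  have hrest : ∀ i ∈ univ.erase k,
      Tendsto (fun α => α * softmax (fun l => α * a l + ε l α) i) atTop (𝓝 0) :=
    fun i hi => tendsto_mul_softmax_of_lt hε (hk i (ne_of_mem_erase hi))
  by_cases hjk : j = k
  · subst hjk
    have : Nonempty ι := ⟨j⟩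
    have hsum := (tendsto_finsetSum _ hrest).neg
    rw [sum_const_zero, neg_zero] at hsum
    refine hsum.congr fun α => ?_
    rw [← Finset.mul_sum, ← mul_neg, if_pos rfl, ← sum_softmax (fun l => α * a l + ε l α),
      ← add_sum_erase _ _ (mem_univ j)]
    ring
  · simpa [hjk] using hrest j (mem_erase.mpr ⟨hjk, mem_univ j⟩)

end Softmax

section Rank

variable {ι β : Type*} [Fintype ι] [LinearOrder β] {S : ι → β}

noncomputable def rankOf (S : ι → β) (j : ι) : ℕ := #{i | S j < S i}

lemma rankOf_lt_rankOf {a b : ι} (h : S a < S b) : rankOf S b < rankOf S a := by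
  refine card_lt_card ((ssubset_iff_of_subset fun i hi => ?_).mpr ⟨b, ?_, ?_⟩)
  · simp only [mem_filter, mem_univ, true_and] at hi ⊢
    exact h.trans hi
  · simpa using h
  · simp

lemma rankOf_lt_card (j : ι) : rankOf S j < Fintype.card ι :=
  card_lt_univ_of_notMem (x := j) (by simp)

lemma lt_of_rankOf_lt (hS : Function.Injective S) {a b : ι} (h : rankOf S b < rankOf S a) :
    S a < S b := by
  refine lt_of_le_of_ne (le_of_not_gt fun hba => ?_) fun hab => ?_
  · exact (rankOf_lt_rankOf hba).not_gt h
  · exact h.ne (congrArg (rankOf S) (hS hab)).symm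

lemma rankOf_injective (hS : Function.Injective S) : Function.Injective (rankOf S) := by
  intro a b hab
  by_contra hne
  rcases (hS.ne hne).lt_or_gt with h | h
  · exact (rankOf_lt_rankOf h).ne hab.symm
  · exact (rankOf_lt_rankOf h).ne hab

lemma exists_rankOf_eq (hS : Function.Injective S) {r : ℕ} (hr : r < Fintype.card ι) :
    ∃ j, rankOf S j = r := by
  let rank : ι → Fin (Fintype.card ι) := fun j => ⟨rankOf S j, rankOf_lt_card j⟩
  have hrank : Function.Bijective rank :=
    (Fintype.bijective_iff_injective_and_card rank).mpr
      ⟨fun a b h => rankOf_injective hS (congrArg Fin.val h), by simp⟩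
  obtain ⟨j, hj⟩ := hrank.surjective ⟨r, hr⟩
  exact ⟨j, congrArg Fin.val hj⟩

end Rank

lemma trueI_eq_ite_rankOf {N : ℕ} (S : Fin N → ℝ) (r : ℕ) (j : Fin N) :
    trueI S r j = if rankOf S j = r then 1 else 0 :=
  rfl

section Mask

variable {N : ℕ} {S : Fin N → ℝ} {δ : ℝ}

/-- The limit of `prodMask` as `α → ∞`. -/
noncomputable def trueMask (S : Fin N → ℝ) (δ : ℝ) : ℕ → Fin N → ℝ
  | 0, _ => 1
  | r + 1, j => trueMask S δ r j * (1 - trueI S r j - δ)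

lemma trueMask_eq (r : ℕ) (j : Fin N) :
    trueMask S δ r j = if rankOf S j < r then -δ * (1 - δ) ^ (r - 1) else (1 - δ) ^ r := by
  induction r with
  | zero => simp [trueMask]
  | succ r ih =>
    rw [trueMask, ih, trueI_eq_ite_rankOf]
    rcases lt_trichotomy (rankOf S j) r with h | rfl | h
    · rw [if_pos h, if_neg h.ne, if_pos (by omega), Nat.add_sub_cancel,
        ← pow_sub_one_mul (by omega : r ≠ 0)]
      ring
    · simp [mul_comm]
    · rw [if_neg (by omega), if_neg h.ne', if_neg (by omega), pow_succ]
      ring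

lemma mul_trueMask_lt (hpos : ∀ i, 0 < S i) (hS : Function.Injective S) (hδ₀ : 0 ≤ δ)
    (hδ₁ : δ < 1) {r : ℕ} {i k : Fin N} (hk : rankOf S k = r) (hik : i ≠ k) :
    S i * trueMask S δ r i < S k * trueMask S δ r k := by
  have hmask_k : trueMask S δ r k = (1 - δ) ^ r := by simp [trueMask_eq, hk]
  have hk_pos : 0 < S k * (1 - δ) ^ r := mul_pos (hpos k) (pow_pos (by linarith) r)
  rw [hmask_k, trueMask_eq]
  split_ifs with hi
  · have : 0 ≤ δ * (1 - δ) ^ (r - 1) := mul_nonneg hδ₀ (pow_nonneg (by linarith) _)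
    nlinarith [hpos i]
  · have hr : r < rankOf S i := lt_of_le_of_ne (not_lt.mp hi) fun h =>
      hik (rankOf_injective hS (h.symm.trans hk.symm))
    have hSi : S i < S k := lt_of_rankOf_lt hS (hk ▸ hr)
    exact mul_lt_mul_of_pos_right hSi (pow_pos (by linarith) r)

lemma smoothI_eq_softmax (α : ℝ) (r : ℕ) (j : Fin N) :
    smoothI S α δ r j = softmax (fun i => α * S i * prodMask S α δ r i) j :=
  rfl

lemma prodMask_succ (α : ℝ) (r : ℕ) (j : Fin N) :
    prodMask S α δ (r + 1) j = prodMask S α δ r j * (1 - smoothI S α δ r j - δ) :=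
  rfl

lemma tendsto_mul_smoothI_sub_trueI (hpos : ∀ i, 0 < S i) (hS : Function.Injective S)
    (hδ₀ : 0 ≤ δ) (hδ₁ : δ < 1) {r : ℕ} (hr : r < N)
    (hmask : ∀ i, Tendsto (fun α => α * (prodMask S α δ r i - trueMask S δ r i)) atTop (𝓝 0))
    (j : Fin N) :
    Tendsto (fun α => α * (smoothI S α δ r j - trueI S r j)) atTop (𝓝 0) := by
  obtain ⟨k, hk⟩ := exists_rankOf_eq hS (by simpa using hr)
  have hε : ∀ i, Tendsto (fun α => S i * (α * (prodMask S α δ r i - trueMask S δ r i)))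
      atTop (𝓝 0) := fun i => by simpa using (hmask i).const_mul (S i)
  have hmax : ∀ i ≠ k, S i * trueMask S δ r i < S k * trueMask S δ r k :=
    fun i hik => mul_trueMask_lt hpos hS hδ₀ hδ₁ hk hik
  have htrueI : trueI S r j = if j = k then 1 else 0 := by
    simp only [trueI_eq_ite_rankOf, ← hk, (rankOf_injective hS).eq_iff]
  refine (tendsto_mul_softmax_sub_ite hε hmax j).congr fun α => ?_
  rw [smoothI_eq_softmax, htrueI]
  congr 3
  ext i
  ring

lemma tendsto_mul_prodMask_succ_sub_trueMask {r : ℕ} {j : Fin N}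
    (hmask : Tendsto (fun α => α * (prodMask S α δ r j - trueMask S δ r j)) atTop (𝓝 0))
    (hI : Tendsto (fun α => α * (smoothI S α δ r j - trueI S r j)) atTop (𝓝 0)) :
    Tendsto (fun α => α * (prodMask S α δ (r + 1) j - trueMask S δ (r + 1) j))
      atTop (𝓝 0) := by
  have hfactor : Tendsto (fun α => 1 - smoothI S α δ r j - δ) atTop
      (𝓝 (1 - trueI S r j - δ)) :=
    (tendsto_const_nhds.sub (tendsto_of_tendsto_mul_sub hI)).sub tendsto_const_nhds
  have h := (hmask.mul hfactor).sub (hI.const_mul (trueMask S δ r j))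
  rw [zero_mul, mul_zero, sub_zero] at h
  refine h.congr fun α => ?_
  rw [prodMask_succ, trueMask]
  ring

lemma tendsto_mul_prodMask_sub_trueMask (hpos : ∀ i, 0 < S i) (hS : Function.Injective S)
    (hδ₀ : 0 ≤ δ) (hδ₁ : δ < 1) {r : ℕ} (hr : r ≤ N) (j : Fin N) :
    Tendsto (fun α => α * (prodMask S α δ r j - trueMask S δ r j)) atTop (𝓝 0) := by
  induction r generalizing j with
  | zero => simp [prodMask, trueMask]
  | succ r ih =>
    have hmask := fun i => ih (by omega) i
    exact tendsto_mul_prodMask_succ_sub_trueMask (hmask j)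
      (tendsto_mul_smoothI_sub_trueI hpos hS hδ₀ hδ₁ (by omega) hmask j)

end Mask

/-- for every rank `r ∈ {1,…,N}` (here 0-indexed, `r < N`) and every
document `j`, the smooth rank indicator `I_j^{r,α}` converges to the true rank
indicator `I_j^r` as `α → +∞`. -/
theorem smoothI_tendsto_trueI {N : ℕ} (S : Fin N → ℝ)
    (hpos : ∀ i, 0 < S i) (hinj : Function.Injective S)
    (δ : ℝ) (hδ : δ ∈ Set.Ioo (0 : ℝ) 0.5)
    (r : ℕ) (hr : r < N) (j : Fin N) :
    Filter.Tendsto (fun α : ℝ => smoothI S α δ r j) Filter.atTop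
      (nhds (trueI S r j)) := by
  have hδ₀ : 0 ≤ δ := hδ.1.le
  have hδ₁ : δ < 1 := hδ.2.trans (by norm_num)
  have hmask := tendsto_mul_prodMask_sub_trueMask hpos hinj hδ₀ hδ₁ hr.le
  exact tendsto_of_tendsto_mul_sub (tendsto_mul_smoothI_sub_trueI hpos hinj hδ₀ hδ₁ hr hmask j)
end

section
/- Suppose |I_j^r - I_j^{r,α}| ≤ ε for all r, j ∈ {1,...,N}, rel(j) ∈ {0,1}, and additionally 0 ≤ Σ_j rel(j) I_j^r ≤ 1 and 0 ≤ Σ_j rel(j) I_j^{r,α} ≤ 1 for all r, and Σ_j rel(j) ≥ 1. Define AP = (1/Σ_j rel(j)) Σ_{K=1}^N (Σ_j rel(j) I_j^K)·P@K and AP^α the same with I replaced by I^α, where P@K = (1/K) Σ_{r=1}^K Σ_j rel(j) I_j^r. Then |AP - AP^α| ≤ 2N(ε + ε²). -/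
lemma ap_aux {N : ℕ} (a b : ℕ → ℝ) (m ε : ℝ) (hm : 1 ≤ m) (hε : 0 ≤ ε)
    (ha : ∀ k < N, a k ∈ Set.Icc (0:ℝ) 1) (hb : ∀ k < N, b k ∈ Set.Icc (0:ℝ) 1)
    (hab : ∀ k < N, |a k - b k| ≤ m * ε) :
    |(1/m) * ∑ k ∈ Finset.range N, a k * ((1/((k:ℝ)+1)) * ∑ r ∈ Finset.range (k+1), a r)
      - (1/m) * ∑ k ∈ Finset.range N, b k * ((1/((k:ℝ)+1)) * ∑ r ∈ Finset.range (k+1), b r)|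
      ≤ 2 * N * ε := by
  have hm0 : (0:ℝ) < m := lt_of_lt_of_le one_pos hm
  have key : ∀ k ∈ Finset.range N,
      |a k * ((1/((k:ℝ)+1)) * ∑ r ∈ Finset.range (k+1), a r)
        - b k * ((1/((k:ℝ)+1)) * ∑ r ∈ Finset.range (k+1), b r)| ≤ 2*(m*ε) := by
    intro k hk
    rw [Finset.mem_range] at hk
    have hrN : ∀ r ∈ Finset.range (k+1), r < N := fun r hr =>
      lt_of_lt_of_le (Finset.mem_range.mp hr) hk
    set P := (1/((k:ℝ)+1)) * ∑ r ∈ Finset.range (k+1), a r with hP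
    set Q := (1/((k:ℝ)+1)) * ∑ r ∈ Finset.range (k+1), b r with hQ
    have hk1 : (0:ℝ) < (k:ℝ)+1 := by positivity
    have hP0 : 0 ≤ P := mul_nonneg (by positivity)
      (Finset.sum_nonneg fun r hr => (ha r (hrN r hr)).1)
    have hQ0 : 0 ≤ Q := mul_nonneg (by positivity)
      (Finset.sum_nonneg fun r hr => (hb r (hrN r hr)).1)
    have hsa : ∑ r ∈ Finset.range (k+1), a r ≤ (k:ℝ)+1 := by
      calc ∑ r ∈ Finset.range (k+1), a r ≤ ∑ r ∈ Finset.range (k+1), (1:ℝ) :=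
            Finset.sum_le_sum fun r hr => (ha r (hrN r hr)).2
        _ = (k:ℝ)+1 := by simp
    have hsb : ∑ r ∈ Finset.range (k+1), b r ≤ (k:ℝ)+1 := by
      calc ∑ r ∈ Finset.range (k+1), b r ≤ ∑ r ∈ Finset.range (k+1), (1:ℝ) :=
            Finset.sum_le_sum fun r hr => (hb r (hrN r hr)).2
        _ = (k:ℝ)+1 := by simp
    have hP1 : P ≤ 1 := by
      rw [hP]
      calc (1/((k:ℝ)+1)) * ∑ r ∈ Finset.range (k+1), a r
          ≤ (1/((k:ℝ)+1)) * ((k:ℝ)+1) := by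
            exact mul_le_mul_of_nonneg_left hsa (by positivity)
        _ = 1 := by field_simp
    have hQ1 : Q ≤ 1 := by
      rw [hQ]
      calc (1/((k:ℝ)+1)) * ∑ r ∈ Finset.range (k+1), b r
          ≤ (1/((k:ℝ)+1)) * ((k:ℝ)+1) := by
            exact mul_le_mul_of_nonneg_left hsb (by positivity)
        _ = 1 := by field_simp
    have hPQ : |P - Q| ≤ m * ε := by
      rw [hP, hQ, ← mul_sub, ← Finset.sum_sub_distrib, abs_mul,
        abs_of_pos (show (0:ℝ) < 1/((k:ℝ)+1) by positivity)]
      have h1 : |∑ r ∈ Finset.range (k+1), (a r - b r)| ≤ ((k:ℝ)+1) * (m*ε) := by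
        calc |∑ r ∈ Finset.range (k+1), (a r - b r)|
            ≤ ∑ r ∈ Finset.range (k+1), |a r - b r| := Finset.abs_sum_le_sum_abs _ _
          _ ≤ ∑ r ∈ Finset.range (k+1), m*ε :=
              Finset.sum_le_sum fun r hr => hab r (hrN r hr)
          _ = ((k:ℝ)+1) * (m*ε) := by
              rw [Finset.sum_const, Finset.card_range]; ring
      calc (1/((k:ℝ)+1)) * |∑ r ∈ Finset.range (k+1), (a r - b r)|
          ≤ (1/((k:ℝ)+1)) * (((k:ℝ)+1) * (m*ε)) :=
            mul_le_mul_of_nonneg_left h1 (by positivity)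
        _ = m*ε := by field_simp
    have habk := hab k hk
    have hmε : 0 ≤ m*ε := by positivity
    have hbk1 : |b k| ≤ 1 := by
      rw [abs_of_nonneg (hb k hk).1]; exact (hb k hk).2
    have hPabs : |P| ≤ 1 := by rw [abs_of_nonneg hP0]; exact hP1
    calc |a k * P - b k * Q| = |(a k - b k) * P + b k * (P - Q)| := by
          rw [show a k * P - b k * Q = (a k - b k) * P + b k * (P - Q) from by ring]
      _ ≤ |(a k - b k) * P| + |b k * (P - Q)| := abs_add_le _ _
      _ = |a k - b k| * |P| + |b k| * |P - Q| := by
          rw [abs_mul (a k - b k) P, abs_mul (b k) (P - Q)]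
      _ ≤ (m*ε) * 1 + 1 * (m*ε) := by
          apply add_le_add
          · exact mul_le_mul habk hPabs (abs_nonneg _) hmε
          · exact mul_le_mul hbk1 hPQ (abs_nonneg _) zero_le_one
      _ = 2*(m*ε) := by ring
  rw [← mul_sub, ← Finset.sum_sub_distrib, abs_mul,
    abs_of_pos (show (0:ℝ) < 1/m by positivity)]
  calc (1/m) * |∑ k ∈ Finset.range N, (a k * ((1/((k:ℝ)+1)) * ∑ r ∈ Finset.range (k+1), a r)
        - b k * ((1/((k:ℝ)+1)) * ∑ r ∈ Finset.range (k+1), b r))|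
      ≤ (1/m) * ∑ k ∈ Finset.range N, |a k * ((1/((k:ℝ)+1)) * ∑ r ∈ Finset.range (k+1), a r)
        - b k * ((1/((k:ℝ)+1)) * ∑ r ∈ Finset.range (k+1), b r)| :=
        mul_le_mul_of_nonneg_left (Finset.abs_sum_le_sum_abs _ _) (by positivity)
    _ ≤ (1/m) * ∑ k ∈ Finset.range N, 2*(m*ε) :=
        mul_le_mul_of_nonneg_left (Finset.sum_le_sum key) (by positivity)
    _ = 2 * N * ε := by
        rw [Finset.sum_const, Finset.card_range]; field_simp; ring

/-- bound on the approximation of average precision.  Ranks are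
0-indexed: `I k j` stands for `I_j^{k+1}`, `P@K` for `K ∈ {1,…,N}` is given by
`(1/K) ∑_{r<K} ∑_j rel j * I r j`, and
`AP = (1/∑_j rel j) ∑_{k<N} (∑_j rel j * I k j) * P@(k+1)`.
Then `|AP - AP^α| ≤ 2N(ε + ε²)`. -/
theorem average_precision_approx_bound {N : ℕ}
    (I Iα : ℕ → Fin N → ℝ) (ε : ℝ)
    (hclose : ∀ r < N, ∀ j, |I r j - Iα r j| ≤ ε)
    (rel : Fin N → ℝ) (hrel : ∀ j, rel j = 0 ∨ rel j = 1)
    (hm : 1 ≤ ∑ j, rel j)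
    (hI01 : ∀ r < N, (∑ j, rel j * I r j) ∈ Set.Icc (0 : ℝ) 1)
    (hIα01 : ∀ r < N, (∑ j, rel j * Iα r j) ∈ Set.Icc (0 : ℝ) 1) :
    |(1 / ∑ j, rel j) * ∑ k ∈ Finset.range N, (∑ j, rel j * I k j) *
          ((1 / ((k : ℝ) + 1)) * ∑ r ∈ Finset.range (k + 1), ∑ j, rel j * I r j) -
        (1 / ∑ j, rel j) * ∑ k ∈ Finset.range N, (∑ j, rel j * Iα k j) *
          ((1 / ((k : ℝ) + 1)) * ∑ r ∈ Finset.range (k + 1), ∑ j, rel j * Iα r j)| ≤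
      2 * (N : ℝ) * (ε + ε ^ 2) := by
  have hN : 0 < N := by
    rcases Nat.eq_zero_or_pos N with h | h
    · subst h
      simp only [Finset.univ_eq_empty, Finset.sum_empty] at hm
      linarith
    · exact h
  have hε : 0 ≤ ε := (abs_nonneg _).trans (hclose 0 hN ⟨0, hN⟩)
  have hrel0 : ∀ j, 0 ≤ rel j := fun j => by rcases hrel j with h | h <;> simp [h]
  have hab : ∀ r < N, |(∑ j, rel j * I r j) - ∑ j, rel j * Iα r j| ≤ (∑ j, rel j) * ε := by
    intro r hr
    rw [← Finset.sum_sub_distrib]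
    calc |∑ j, (rel j * I r j - rel j * Iα r j)|
        ≤ ∑ j, |rel j * I r j - rel j * Iα r j| := Finset.abs_sum_le_sum_abs _ _
      _ ≤ ∑ j, rel j * ε := by
          apply Finset.sum_le_sum; intro j _
          rw [← mul_sub, abs_mul, abs_of_nonneg (hrel0 j)]
          exact mul_le_mul_of_nonneg_left (hclose r hr j) (hrel0 j)
      _ = (∑ j, rel j) * ε := by rw [← Finset.sum_mul]
  calc |(1 / ∑ j, rel j) * ∑ k ∈ Finset.range N, (∑ j, rel j * I k j) *
          ((1 / ((k : ℝ) + 1)) * ∑ r ∈ Finset.range (k + 1), ∑ j, rel j * I r j) -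
        (1 / ∑ j, rel j) * ∑ k ∈ Finset.range N, (∑ j, rel j * Iα k j) *
          ((1 / ((k : ℝ) + 1)) * ∑ r ∈ Finset.range (k + 1), ∑ j, rel j * Iα r j)|
      ≤ 2 * (N : ℝ) * ε := by
        exact ap_aux (fun r => ∑ j, rel j * I r j) (fun r => ∑ j, rel j * Iα r j)
          (∑ j, rel j) ε hm hε hI01 hIα01 hab
    _ ≤ 2 * (N : ℝ) * (ε + ε ^ 2) := by nlinarith [sq_nonneg ε, (Nat.cast_pos (α := ℝ)).mpr hN]
end
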